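/- The matrix exponential of the spin matrix of a vector φ ∈ ℝ³ equals the Rodrigues formula: exp(S(φ)) = I + (sin φ̄/φ̄) S(φ) + ((1 − cos φ̄)/φ̄²) S(φ)², where φ̄ = ‖φ‖ ≠ 0. -/

import Mathlib

/-!
Since `S(φ)³ = -φ̄² S(φ)`, every odd power of `S(φ)` is a real multiple of `S(φ)` and every
positive even power a real multiple of `S(φ)²`. Splitting the exponential series into its odd and
even parts therefore leaves the scalar series of `sin φ̄ / φ̄` and `(1 - cos φ̄) / φ̄²`.
-/

open Matrix Real

noncomputable def spin (a : Fin 3 → ℝ) : Matrix (Fin 3) (Fin 3) ℝ :=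
  !![0, -a 2, a 1; a 2, 0, -a 0; -a 1, a 0, 0]

noncomputable def enorm3 (a : Fin 3 → ℝ) : ℝ :=
  Real.sqrt (a 0 ^ 2 + a 1 ^ 2 + a 2 ^ 2)

noncomputable def rod (φ : Fin 3 → ℝ) : Matrix (Fin 3) (Fin 3) ℝ :=
  1 + (Real.sin (enorm3 φ) / enorm3 φ) • spin φ
    + ((1 - Real.cos (enorm3 φ)) / (enorm3 φ) ^ 2) • (spin φ ^ 2)

open NormedSpace

section PowThree

variable {R A : Type*} [Monoid R] [Monoid A] [MulAction R A] [IsScalarTower R A A]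
  {x : A} {c : R}

theorem pow_two_mul_add_one_of_pow_three_eq_smul (hx : x ^ 3 = c • x) (k : ℕ) :
    x ^ (2 * k + 1) = c ^ k • x := by
  induction k with
  | zero => simp
  | succ k ih =>
    have hx' : x * x ^ 2 = c • x := (pow_succ' x 2).symm.trans hx
    rw [show 2 * (k + 1) + 1 = 2 * k + 1 + 2 by ring, pow_add, ih, smul_mul_assoc, hx', smul_smul,
      ← pow_succ]

theorem pow_two_mul_succ_of_pow_three_eq_smul (hx : x ^ 3 = c • x) (k : ℕ) :
    x ^ (2 * (k + 1)) = c ^ k • x ^ 2 := by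
  rw [show 2 * (k + 1) = 2 * k + 1 + 1 by ring, pow_succ,
    pow_two_mul_add_one_of_pow_three_eq_smul hx, smul_mul_assoc, ← sq]

end PowThree

section ExpSeries

open Nat

theorem Real.hasSum_sin_div {t : ℝ} (ht : t ≠ 0) :
    HasSum (fun k : ℕ ↦ (-t ^ 2) ^ k / (2 * k + 1)!) (sin t / t) := by
  refine ((Real.hasSum_sin t).div_const t).congr_fun fun k ↦ ?_
  rw [neg_pow, ← pow_mul, pow_succ]
  field_simp

theorem Real.hasSum_one_sub_cos_div_sq {t : ℝ} (ht : t ≠ 0) :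
    HasSum (fun k : ℕ ↦ (-t ^ 2) ^ k / (2 * (k + 1))!) ((1 - cos t) / t ^ 2) := by
  have hcos : HasSum (fun k : ℕ ↦ (-1) ^ (k + 1) * t ^ (2 * (k + 1)) / (2 * (k + 1))!)
      (cos t - 1) := by
    simpa using (hasSum_nat_add_iff' 1).mpr (Real.hasSum_cos t)
  rw [show (1 - cos t) / t ^ 2 = (cos t - 1) / -t ^ 2 by rw [div_neg, ← neg_div, neg_sub]]
  refine (hcos.div_const _).congr_fun fun k ↦ ?_
  rw [neg_pow, ← pow_mul, mul_add, pow_add, pow_succ]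
  field_simp
  ring

theorem exp_eq_of_pow_three_eq_neg_sq_smul {A : Type*} [Ring A] [Algebra ℝ A]
    [TopologicalSpace A] [IsTopologicalRing A] [ContinuousSMul ℝ A] [T2Space A]
    {x : A} {t : ℝ} (ht : t ≠ 0) (hx : x ^ 3 = (-t ^ 2) • x) :
    exp x = 1 + (sin t / t) • x + ((1 - cos t) / t ^ 2) • x ^ 2 := by
  have hodd : HasSum (fun k : ℕ ↦ ((2 * k + 1)! : ℝ)⁻¹ • x ^ (2 * k + 1)) ((sin t / t) • x) :=
    ((Real.hasSum_sin_div ht).smul_const x).congr_fun fun k ↦ by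
      rw [pow_two_mul_add_one_of_pow_three_eq_smul hx, smul_smul, div_eq_inv_mul]
  have heven : HasSum (fun k : ℕ ↦ ((2 * k)! : ℝ)⁻¹ • x ^ (2 * k))
      (1 + ((1 - cos t) / t ^ 2) • x ^ 2) := by
    refine (hasSum_nat_add_iff' 1).mp ?_
    simp only [Finset.range_one, Finset.sum_singleton, mul_zero, factorial_zero, cast_one,
      inv_one, pow_zero, one_smul, add_sub_cancel_left]
    exact ((Real.hasSum_one_sub_cos_div_sq ht).smul_const (x ^ 2)).congr_fun fun k ↦ by
      rw [pow_two_mul_succ_of_pow_three_eq_smul hx, smul_smul, div_eq_inv_mul]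
  have hexp : HasSum (fun n ↦ (n ! : ℝ)⁻¹ • x ^ n)
      (1 + ((1 - cos t) / t ^ 2) • x ^ 2 + (sin t / t) • x) :=
    heven.even_add_odd hodd
  rw [congrFun (exp_eq_tsum ℝ) x, hexp.tsum_eq]
  abel

end ExpSeries

theorem sq_enorm3 (a : Fin 3 → ℝ) : enorm3 a ^ 2 = a 0 ^ 2 + a 1 ^ 2 + a 2 ^ 2 :=
  Real.sq_sqrt (by positivity)

theorem enorm3_ne_zero {a : Fin 3 → ℝ} (ha : a ≠ 0) : enorm3 a ≠ 0 := by
  intro h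
  have hsum : ∑ i, a i ^ 2 = 0 := by rw [Fin.sum_univ_three, ← sq_enorm3, h, sq, zero_mul]
  rw [Finset.sum_eq_zero_iff_of_nonneg fun i _ ↦ sq_nonneg (a i)] at hsum
  exact ha (funext fun i ↦ (pow_eq_zero_iff two_ne_zero).mp (hsum i (Finset.mem_univ i)))

theorem spin_pow_three (a : Fin 3 → ℝ) : spin a ^ 3 = (-enorm3 a ^ 2) • spin a := by
  rw [sq_enorm3, spin, pow_three, mul_fin_three, mul_fin_three, smul_of]
  simp only [smul_vec3, smul_eq_mul]
  congr 1
  refine vec3_eq ?_ ?_ ?_ <;> refine vec3_eq ?_ ?_ ?_ <;> ring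

theorem stmt5 (φ : Fin 3 → ℝ) (hφ : φ ≠ 0) :
    NormedSpace.exp (spin φ) = rod φ :=
  exp_eq_of_pow_three_eq_neg_sq_smul (enorm3_ne_zero hφ) (spin_pow_three φ)
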